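/- If H ≠ K_5 is a 5-Ore graph and T is a subgraph of H isomorphic to K_4, then there exists either an Ore-collapsible subset of H disjoint from T or an emerald of H disjoint from T. -/

import Mathlib

open SimpleGraph

namespace Postle

noncomputable def epsC : ℝ := 1 / 21
noncomputable def delC : ℝ := 8 / 21
noncomputable def PC : ℝ := 48 / 21
noncomputable def QC : ℝ := 8 / 21

/-- The degree of a vertex, via the cardinality of its neighbor set. -/
noncomputable def degS {V : Type} (G : SimpleGraph V) (v : V) : ℕ :=
  (G.neighborSet v).ncard

/-- A graph is 5-critical if it is not 4-colorable but every proper subgraph is. -/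
def FiveCritical {V : Type} (G : SimpleGraph V) : Prop :=
  ¬ G.Colorable 4 ∧ ∀ H : SimpleGraph V, H < G → H.Colorable 4

/-- `G` is (isomorphic to) the complete graph `K₅`. -/
def IsK5 {V : Type} (G : SimpleGraph V) : Prop :=
  Nonempty (G ≃g (⊤ : SimpleGraph (Fin 5)))

/-- `T(G)`: the maximum, over collections of pairwise disjoint cliques of size 3 or 4 in `G`,
of (number of 3-cliques) + 2 * (number of 4-cliques); each clique of size `k` contributes
`k - 2`. -/
noncomputable def TT {V : Type} (G : SimpleGraph V) : ℕ :=
  sSup { n : ℕ | ∃ C : Finset (Finset V),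
    ((C : Set (Finset V)).Pairwise fun A B => Disjoint A B) ∧
    (∀ W ∈ C, G.IsClique (W : Set V) ∧ (W.card = 3 ∨ W.card = 4)) ∧
    n = ∑ W ∈ C, (W.card - 2) }

/-- The potential `p(G) = (9+ε)|V(G)| - 4|E(G)| - δ·T(G)` with `ε = 1/21`, `δ = 8/21`. -/
noncomputable def pot {V : Type} (G : SimpleGraph V) : ℝ :=
  (9 + epsC) * (Nat.card V : ℝ) - 4 * (G.edgeSet.ncard : ℝ) - delC * (TT G : ℝ)

/-- `p_G(R) = p(G[R])`. -/
noncomputable def potOn {V : Type} (G : SimpleGraph V) (R : Set V) : ℝ :=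
  pot (G.induce R)

/-- The Kostochka–Yancey potential `p_KY(G) = 9|V(G)| - 4|E(G)|`. -/
noncomputable def potKY {V : Type} (G : SimpleGraph V) : ℝ :=
  9 * (Nat.card V : ℝ) - 4 * (G.edgeSet.ncard : ℝ)

noncomputable def potKYOn {V : Type} (G : SimpleGraph V) (R : Set V) : ℝ :=
  potKY (G.induce R)

/-- `G` is an Ore-composition of `G₁` (the edge side, with replaced edge `xy`) and `G₂`
(the vertex side, with split vertex `z`): delete the edge `xy` of `G₁`, split `z` into two
vertices of positive degree, and identify them with `x` and `y`. The set `S` records which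
neighbors of `z` get attached to `x`. -/
def IsOreComposition {V V₁ V₂ : Type} (G : SimpleGraph V)
    (G₁ : SimpleGraph V₁) (G₂ : SimpleGraph V₂) : Prop :=
  ∃ (x y : V₁) (z : V₂) (f₁ : V₁ ↪ V) (f₂ : {w : V₂ // w ≠ z} ↪ V) (S : Set V₂),
    G₁.Adj x y ∧
    (∀ w ∈ S, G₂.Adj z w) ∧ S.Nonempty ∧ (G₂.neighborSet z \ S).Nonempty ∧
    Set.range ⇑f₁ ∩ Set.range ⇑f₂ = ∅ ∧
    Set.range ⇑f₁ ∪ Set.range ⇑f₂ = Set.univ ∧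
    ∀ a b : V, G.Adj a b ↔
      ((∃ a' b' : V₁, f₁ a' = a ∧ f₁ b' = b ∧ G₁.Adj a' b' ∧
          ¬(a' = x ∧ b' = y) ∧ ¬(a' = y ∧ b' = x)) ∨
       (∃ a' b' : {w : V₂ // w ≠ z}, f₂ a' = a ∧ f₂ b' = b ∧ G₂.Adj a'.1 b'.1) ∨
       (∃ w : {w : V₂ // w ≠ z}, G₂.Adj z w.1 ∧
         ((((a = f₁ x ∧ b = f₂ w) ∨ (b = f₁ x ∧ a = f₂ w)) ∧ w.1 ∈ S) ∨
          (((a = f₁ y ∧ b = f₂ w) ∨ (b = f₁ y ∧ a = f₂ w)) ∧ w.1 ∉ S))))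

/-- A graph is 5-Ore if it can be obtained from copies of `K₅` by repeated Ore-compositions. -/
inductive Is5Ore : {V : Type} → SimpleGraph V → Prop
  | k5 {V : Type} {G : SimpleGraph V} (h : IsK5 G) : Is5Ore G
  | ore {V V₁ V₂ : Type} {G : SimpleGraph V} {G₁ : SimpleGraph V₁} {G₂ : SimpleGraph V₂}
      (h₁ : Is5Ore G₁) (h₂ : Is5Ore G₂) (h : IsOreComposition G G₁ G₂) : Is5Ore G

/-- The boundary of `R`: the vertices of `R` with a neighbor outside `R`. -/
def boundary {V : Type} (G : SimpleGraph V) (R : Set V) : Set V :=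
  {v : V | v ∈ R ∧ ∃ w, w ∉ R ∧ G.Adj v w}

/-- The graph `G + uv` obtained by adding the edge `uv`. -/
noncomputable def addEdge {α : Type} (G : SimpleGraph α) (u v : α) : SimpleGraph α :=
  G ⊔ SimpleGraph.fromEdgeSet {s(u, v)}

/-- `R` is an Ore-collapsible subset of `G`: a proper subset whose boundary consists of exactly
two non-adjacent vertices `u, v` such that `G[R] + uv` is 5-Ore. -/
def OreCollapsible {V : Type} (G : SimpleGraph V) (R : Set V) : Prop :=
  R ≠ Set.univ ∧ ∃ u v : ↥R, u.1 ≠ v.1 ∧ ¬ G.Adj u.1 v.1 ∧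
    boundary G R = {u.1, v.1} ∧ Is5Ore (addEdge (G.induce R) u v)

/-- An emerald: a subgraph isomorphic to `K₄` all of whose vertices have degree 4 in `G`,
given by its vertex set. -/
def IsEmerald {V : Type} (G : SimpleGraph V) (S : Set V) : Prop :=
  S.ncard = 4 ∧ (∀ a ∈ S, ∀ b ∈ S, a ≠ b → G.Adj a b) ∧ ∀ v ∈ S, degS G v = 4

/-- A diamond: a subgraph isomorphic to `K₅ - e` in which the vertices not incident to `e`
have degree 4 in `G`, given by its vertex set. -/
def IsDiamond {V : Type} (G : SimpleGraph V) (D : Set V) : Prop :=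
  D.ncard = 5 ∧ ∃ u ∈ D, ∃ v ∈ D, u ≠ v ∧
    (∀ a ∈ D, ∀ b ∈ D, a ≠ b → ¬(a = u ∧ b = v) → ¬(a = v ∧ b = u) → G.Adj a b) ∧
    ∀ w ∈ D, w ≠ u → w ≠ v → degS G w = 4

/-- A graph is ungemmed if it contains neither a diamond nor an emerald. -/
def Ungemmed {V : Type} (G : SimpleGraph V) : Prop :=
  (¬ ∃ D : Set V, IsDiamond G D) ∧ ¬ ∃ S : Set V, IsEmerald G S

/-- `R` is collapsible: a proper subset with `|R| ≥ 5` such that in every proper 4-coloring of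
`G[R]` all boundary vertices of `R` receive the same color. -/
def Collapsible {V : Type} (G : SimpleGraph V) (R : Set V) : Prop :=
  R ≠ Set.univ ∧ 5 ≤ R.ncard ∧
    ∀ φ : (G.induce R).Coloring (Fin 4), ∀ u v : ↥R,
      u.1 ∈ boundary G R → v.1 ∈ boundary G R → φ u = φ v

/-- The critical complement of a collapsible set `R`: identify the boundary of `R` to a single
new vertex (`none`) and delete the rest of `R`. -/
noncomputable def criticalComplement {V : Type} (G : SimpleGraph V) (R : Set V) :
    SimpleGraph (Option ↥(Rᶜ)) :=
  SimpleGraph.fromRel fun a b =>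
    match a, b with
    | some w, some w' => G.Adj w.1 w'.1
    | none, some w => ∃ x ∈ boundary G R, G.Adj x w.1
    | _, _ => False

/-- The φ-identification `G_φ(R)`: vertices outside `R` together with four vertices `x_i`;
the vertices of `R` colored `i` are identified to `x_i`, and all edges `x_i x_j` are added. -/
noncomputable def phiIdent {V : Type} (G : SimpleGraph V) (R : Set V) (φ : ↥R → Fin 4) :
    SimpleGraph ((↥(Rᶜ)) ⊕ Fin 4) :=
  SimpleGraph.fromRel fun a b =>
    match a, b with
    | Sum.inl w, Sum.inl w' => G.Adj w.1 w'.1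
    | Sum.inl w, Sum.inr i => ∃ r : ↥R, φ r = i ∧ G.Adj r.1 w.1
    | Sum.inr _, Sum.inr _ => True
    | _, _ => False

/-- A critical extension of `R` in `G`: a proper 4-coloring `φ` of `G[R]` together with a
5-critical subgraph `W` of the φ-identification `G_φ(R)`, with vertex set `S`. -/
structure CriticalExtension {V : Type} (G : SimpleGraph V) (R : Set V) where
  φ : (G.induce R).Coloring (Fin 4)
  S : Set ((↥(Rᶜ)) ⊕ Fin 4)
  W : SimpleGraph ↥S
  le : W ≤ (phiIdent G R ⇑φ).induce S
  crit : FiveCritical W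

/-- The critical extension `R' = (V(W) - V(X)) ∪ R` of `R`. -/
noncomputable def CriticalExtension.verts {V : Type} {G : SimpleGraph V} {R : Set V}
    (E : CriticalExtension G R) : Set V :=
  R ∪ {v : V | ∃ h : v ∈ Rᶜ, Sum.inl (⟨v, h⟩ : ↥(Rᶜ)) ∈ E.S}

/-- The size `|X|` of the core `W ∩ X` of the extension. -/
noncomputable def CriticalExtension.coreCard {V : Type} {G : SimpleGraph V} {R : Set V}
    (E : CriticalExtension G R) : ℕ :=
  {i : Fin 4 | Sum.inr i ∈ E.S}.ncard

/-- The graph `W - X` obtained from the extender `W` by deleting the core vertices. -/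
noncomputable def CriticalExtension.WminusX {V : Type} {G : SimpleGraph V} {R : Set V}
    (E : CriticalExtension G R) :=
  E.W.induce {w : ↥E.S | w.1.isLeft = true}

/-- `f(n) = (9+ε)n - 4·C(n,2)`. -/
noncomputable def fExt (n : ℕ) : ℝ := (9 + epsC) * (n : ℝ) - 4 * ((n.choose 2 : ℕ) : ℝ)

/-- The closed neighborhood of a vertex. -/
def closedNbhd {V : Type} (G : SimpleGraph V) (v : V) : Set V :=
  insert v (G.neighborSet v)

/-- A cluster: a maximal set of degree-four vertices with the same closed neighborhood. -/
def IsCluster {V : Type} (G : SimpleGraph V) (C : Set V) : Prop :=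
  C.Nonempty ∧ (∀ v ∈ C, degS G v = 4) ∧
  (∀ u ∈ C, ∀ v ∈ C, closedNbhd G u = closedNbhd G v) ∧
  ∀ C' : Set V, C ⊆ C' → (∀ v ∈ C', degS G v = 4) →
    (∀ u ∈ C', ∀ v ∈ C', closedNbhd G u = closedNbhd G v) → C' = C

open Classical in
/-- The list of cluster sizes of `G`, in decreasing order. -/
noncomputable def clusterList {V : Type} [Fintype V] (G : SimpleGraph V) : List ℕ :=
  ((((Finset.univ : Finset V).filter fun v => degS G v = 4).image
      fun v => (Finset.univ : Finset V).filter
        fun u => degS G u = 4 ∧ closedNbhd G u = closedNbhd G v).val.map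
    Finset.card).sort (· ≤ ·) |>.reverse

/-- `H` is smaller than `G`: fewer vertices; or the same number of vertices and more edges; or
the same number of vertices and edges and `H` precedes `G` in the lexicographic ordering of
cluster sizes listed in decreasing order. -/
def Smaller {V₁ V₂ : Type} [Fintype V₁] [Fintype V₂]
    (H : SimpleGraph V₁) (G : SimpleGraph V₂) : Prop :=
  Nat.card V₁ < Nat.card V₂ ∨
  (Nat.card V₁ = Nat.card V₂ ∧ G.edgeSet.ncard < H.edgeSet.ncard) ∨
  (Nat.card V₁ = Nat.card V₂ ∧ H.edgeSet.ncard = G.edgeSet.ncard ∧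
    List.Lex (· > ·) (clusterList H) (clusterList G))

/-- A 5-critical graph `G` is good if every smaller 5-critical graph satisfies the conclusion
of the main theorem. -/
def Good {V : Type} [Fintype V] (G : SimpleGraph V) : Prop :=
  FiveCritical G ∧
    ∀ (V' : Type) [Fintype V'] (H : SimpleGraph V'), FiveCritical H → Smaller H G →
      (IsK5 H → pot H = 5 + 5 * epsC - 2 * delC) ∧
      (Is5Ore H → ¬ IsK5 H →
        pot H ≤ 5 + (Nat.card V' : ℝ) * epsC - (2 + ((Nat.card V' : ℝ) - 1) / 4) * delC) ∧
      (¬ Is5Ore H → pot H ≤ 5 - PC)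

/-- `G` is tight if it is good and `p(G) ≥ 5 - P - Q`. -/
def Tight {V : Type} [Fintype V] (G : SimpleGraph V) : Prop :=
  Good G ∧ pot G ≥ 5 - PC - QC

/-- `u, v` is an identifiable pair in a proper subset `R`: `G[R] + uv` is not 4-colorable. -/
def IdentifiablePair {V : Type} (G : SimpleGraph V) (R : Set V) (u v : ↥R) : Prop :=
  R ≠ Set.univ ∧ ¬ (addEdge (G.induce R) u v).Colorable 4

/-!
By induction along the Ore-compositions we prove more generally: if `H` is 5-Ore and `T` is a
clique of `H` with `|T| ≤ 1` or `|T| = 4`, then `H = K₅` or some Ore-collapsible set or emerald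
of `H` is disjoint from `T`. For `|T| ≤ 1` the alternative `H = K₅` can be dropped, since the
complement of a vertex of `K₅` is an emerald.

Let `H` be composed of the edge side `G₁`, whose edge `xy` is deleted, and the vertex side `G₂`,
whose vertex `z` is split. If `T` misses the edge side, the edge side itself is Ore-collapsible
with boundary `{x, y}`. If `T` lies in the edge side, induction in `G₂` with `{z}` gives a set
avoiding `z`, and such sets keep their adjacencies and degrees in `H`. Otherwise `T` is a `K₄`
containing, say, `x` and three neighbours of `x` on the vertex side, so `T - x + z` is a `K₄` of
`G₂`, and induction in `G₂` settles the case unless `G₂ = K₅`. Then `x` takes three of the four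
edges at `z` and `y` only one, so `y` keeps its degree from `G₁`, and a set of `G₁` avoiding `x`,
given by induction with `{x}`, carries over to `H`.
-/

section Transport

open Set

lemma addEdge_adj {α : Type} (G : SimpleGraph α) (u v a b : α) :
    (addEdge G u v).Adj a b ↔ G.Adj a b ∨ (a ≠ b ∧ (a = u ∧ b = v ∨ a = v ∧ b = u)) := by
  simp only [addEdge, sup_adj, fromEdgeSet_adj, mem_singleton_iff, Sym2.eq, Sym2.rel_iff',
    Prod.mk.injEq, Prod.swap_prod_mk]
  tauto

lemma IsK5.of_iso {α β : Type} {G : SimpleGraph α} {G' : SimpleGraph β} (h : IsK5 G)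
    (e : G ≃g G') : IsK5 G' :=
  h.elim fun i => ⟨e.symm.trans i⟩

lemma IsOreComposition.of_iso {α β V₁ V₂ : Type} {G : SimpleGraph α} {G' : SimpleGraph β}
    {G₁ : SimpleGraph V₁} {G₂ : SimpleGraph V₂} (h : IsOreComposition G G₁ G₂) (e : G ≃g G') :
    IsOreComposition G' G₁ G₂ := by
  obtain ⟨x, y, z, f₁, f₂, S, hxy, hS, hSne, hSc, hdisj, hcover, hadj⟩ := h
  refine ⟨x, y, z, f₁.trans e.toEquiv.toEmbedding, f₂.trans e.toEquiv.toEmbedding, S,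
    hxy, hS, hSne, hSc, ?_, ?_, fun a b => ?_⟩
  · simp only [Function.Embedding.coe_trans, Equiv.coe_toEmbedding, range_comp]
    rw [← image_inter e.toEquiv.injective, hdisj, image_empty]
  · simp only [Function.Embedding.coe_trans, Equiv.coe_toEmbedding, range_comp]
    rw [← image_union, hcover, image_univ_of_surjective e.toEquiv.surjective]
  · rw [← e.symm.map_adj_iff, hadj]
    simp only [Function.Embedding.trans_apply, Equiv.coe_toEmbedding, RelIso.coe_fn_toEquiv,
      RelIso.eq_symm_apply, RelIso.symm_apply_eq]

lemma Is5Ore.of_iso {α β : Type} {G : SimpleGraph α} {G' : SimpleGraph β} (h : Is5Ore G)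
    (e : G ≃g G') : Is5Ore G' := by
  cases h with
  | k5 h => exact .k5 (h.of_iso e)
  | ore h₁ h₂ h => exact .ore h₁ h₂ (h.of_iso e)

variable {V' V : Type} {G' : SimpleGraph V'} {H : SimpleGraph V}

lemma boundary_image (g : V' → V) {R : Set V'}
    (hbd : ∀ r ∈ R, (∃ s, s ∉ R ∧ G'.Adj r s) ↔ ∃ t, t ∉ g '' R ∧ H.Adj (g r) t) :
    boundary H (g '' R) = g '' boundary G' R := by
  ext t
  constructor
  · rintro ⟨⟨r, hr, rfl⟩, hout⟩
    exact ⟨r, ⟨hr, (hbd r hr).2 hout⟩, rfl⟩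
  · rintro ⟨r, ⟨hr, hout⟩, rfl⟩
    exact ⟨⟨r, hr, rfl⟩, (hbd r hr).1 hout⟩

lemma OreCollapsible.image {R : Set V'} (hR : OreCollapsible G' R) (g : V' → V)
    (hinj : InjOn g R) (hadj : ∀ a ∈ R, ∀ b ∈ R, G'.Adj a b ↔ H.Adj (g a) (g b))
    (hbd : ∀ r ∈ R, (∃ s, s ∉ R ∧ G'.Adj r s) ↔ ∃ t, t ∉ g '' R ∧ H.Adj (g r) t)
    (hne : g '' R ≠ univ) : OreCollapsible H (g '' R) := by
  obtain ⟨-, u, v, huv, hnadj, hbdry, h5⟩ := hR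
  let e := Equiv.Set.imageOfInjOn g R hinj
  refine ⟨hne, e u, e v, fun h => huv (hinj u.2 v.2 h),
    fun h => hnadj ((hadj _ u.2 _ v.2).2 h), ?_, h5.of_iso ⟨e, fun {a b} => ?_⟩⟩
  · rw [boundary_image g hbd, hbdry, image_pair]
    rfl
  · simp only [addEdge_adj, induce_adj, e.injective.eq_iff, ne_eq]
    exact or_congr_left (hadj _ a.2 _ b.2).symm

lemma IsEmerald.image {E : Set V'} (hE : IsEmerald G' E) (g : V' → V) (hinj : InjOn g E)
    (hadj : ∀ a ∈ E, ∀ b ∈ E, G'.Adj a b → H.Adj (g a) (g b))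
    (hdeg : ∀ r ∈ E, degS H (g r) = degS G' r) : IsEmerald H (g '' E) := by
  obtain ⟨h4, hcl, hdg⟩ := hE
  refine ⟨by rw [hinj.ncard_image, h4], ?_, ?_⟩
  · rintro _ ⟨a, ha, rfl⟩ _ ⟨b, hb, rfl⟩ hne
    exact hadj a ha b hb (hcl a ha b hb (ne_of_apply_ne g hne))
  · rintro _ ⟨a, ha, rfl⟩
    rw [hdeg a ha, hdg a ha]

end Transport

namespace IsK5

variable {α : Type} {G : SimpleGraph α}

lemma adj_iff (h : IsK5 G) {a b : α} : G.Adj a b ↔ a ≠ b := by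
  obtain ⟨e⟩ := h
  rw [← e.map_adj_iff, top_adj, e.injective.ne_iff]

lemma finite (h : IsK5 G) : Finite α :=
  h.elim fun e => .of_equiv _ e.toEquiv.symm

lemma ncard_compl_singleton (h : IsK5 G) (v : α) : ({v}ᶜ : Set α).ncard = 4 := by
  have := h.finite
  obtain ⟨e⟩ := h
  rw [Set.ncard_compl, Set.ncard_singleton, Nat.card_congr e.toEquiv, Nat.card_fin]

lemma neighborSet_eq (h : IsK5 G) (v : α) : G.neighborSet v = {v}ᶜ := by
  ext w
  rw [mem_neighborSet, h.adj_iff, Set.mem_compl_singleton_iff, ne_comm]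

lemma degS_eq (h : IsK5 G) (v : α) : degS G v = 4 := by
  rw [degS, h.neighborSet_eq, h.ncard_compl_singleton]

lemma isEmerald_compl_singleton (h : IsK5 G) (v : α) : IsEmerald G {v}ᶜ :=
  ⟨h.ncard_compl_singleton v, fun _ _ _ _ hab => h.adj_iff.2 hab, fun w _ => h.degS_eq w⟩

end IsK5

def ExistsCollapsibleOrEmeraldDisjoint {V : Type} (H : SimpleGraph V) (T : Set V) : Prop :=
  (∃ R : Set V, OreCollapsible H R ∧ Disjoint R T) ∨ ∃ S : Set V, IsEmerald H S ∧ Disjoint S T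

lemma IsK5.existsCollapsibleOrEmeraldDisjoint_singleton {α : Type} {G : SimpleGraph α}
    (h : IsK5 G) (v : α) : ExistsCollapsibleOrEmeraldDisjoint G {v} :=
  .inr ⟨{v}ᶜ, h.isEmerald_compl_singleton v, disjoint_compl_left⟩

structure OreComposition {V V₁ V₂ : Type} (H : SimpleGraph V) (G₁ : SimpleGraph V₁)
    (G₂ : SimpleGraph V₂) where
  x : V₁
  y : V₁
  z : V₂
  f₁ : V₁ ↪ V
  f₂ : {w : V₂ // w ≠ z} ↪ V
  S : Set V₂
  adj_xy : G₁.Adj x y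
  adj_z_of_mem_S : ∀ w ∈ S, G₂.Adj z w
  S_nonempty : S.Nonempty
  neighborSet_diff_S_nonempty : (G₂.neighborSet z \ S).Nonempty
  range_inter_range : Set.range f₁ ∩ Set.range f₂ = ∅
  range_union_range : Set.range f₁ ∪ Set.range f₂ = Set.univ
  adj_iff : ∀ a b : V, H.Adj a b ↔
      ((∃ a' b' : V₁, f₁ a' = a ∧ f₁ b' = b ∧ G₁.Adj a' b' ∧
          ¬(a' = x ∧ b' = y) ∧ ¬(a' = y ∧ b' = x)) ∨
       (∃ a' b' : {w : V₂ // w ≠ z}, f₂ a' = a ∧ f₂ b' = b ∧ G₂.Adj a'.1 b'.1) ∨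
       (∃ w : {w : V₂ // w ≠ z}, G₂.Adj z w.1 ∧
         ((((a = f₁ x ∧ b = f₂ w) ∨ (b = f₁ x ∧ a = f₂ w)) ∧ w.1 ∈ S) ∨
          (((a = f₁ y ∧ b = f₂ w) ∨ (b = f₁ y ∧ a = f₂ w)) ∧ w.1 ∉ S))))

section OreComposition

open Set

variable {V V₁ V₂ : Type} {H : SimpleGraph V} {G₁ : SimpleGraph V₁} {G₂ : SimpleGraph V₂}

lemma IsOreComposition.nonempty_oreComposition (h : IsOreComposition H G₁ G₂) :
    Nonempty (OreComposition H G₁ G₂) :=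
  let ⟨x, y, z, f₁, f₂, S, hxy, hS, hSne, hSc, hdisj, hcover, hadj⟩ := h
  ⟨⟨x, y, z, f₁, f₂, S, hxy, hS, hSne, hSc, hdisj, hcover, hadj⟩⟩

namespace OreComposition

variable (D : OreComposition H G₁ G₂)

lemma f₁_ne_f₂ (a : V₁) (w : {w : V₂ // w ≠ D.z}) : D.f₁ a ≠ D.f₂ w := fun h =>
  (eq_empty_iff_forall_notMem.1 D.range_inter_range) _ ⟨⟨a, rfl⟩, w, h.symm⟩

lemma mem_range_f₁_or_f₂ (v : V) : v ∈ range D.f₁ ∨ v ∈ range D.f₂ := by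
  rw [← mem_union, D.range_union_range]
  trivial

lemma x_ne_y : D.x ≠ D.y := D.adj_xy.ne

lemma adj_f₁_f₁ (a b : V₁) : H.Adj (D.f₁ a) (D.f₁ b) ↔
    G₁.Adj a b ∧ ¬(a = D.x ∧ b = D.y) ∧ ¬(a = D.y ∧ b = D.x) := by
  rw [D.adj_iff]
  constructor
  · rintro (⟨a', b', ha, hb, h⟩ | ⟨a', b', ha, -⟩ |
      ⟨w, -, ⟨⟨-, hb⟩ | ⟨-, ha⟩, -⟩ | ⟨⟨-, hb⟩ | ⟨-, ha⟩, -⟩⟩)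
    · obtain rfl := D.f₁.injective ha
      obtain rfl := D.f₁.injective hb
      exact h
    exacts [(D.f₁_ne_f₂ a a' ha.symm).elim, (D.f₁_ne_f₂ b w hb).elim,
      (D.f₁_ne_f₂ a w ha).elim, (D.f₁_ne_f₂ b w hb).elim, (D.f₁_ne_f₂ a w ha).elim]
  · exact fun h => .inl ⟨a, b, rfl, rfl, h⟩

lemma adj_f₂_f₂ (w w' : {w : V₂ // w ≠ D.z}) :
    H.Adj (D.f₂ w) (D.f₂ w') ↔ G₂.Adj w.1 w'.1 := by
  rw [D.adj_iff]
  constructor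
  · rintro (⟨a', b', ha, -⟩ | ⟨a', b', ha, hb, h⟩ |
      ⟨w₀, -, ⟨⟨ha, -⟩ | ⟨hb, -⟩, -⟩ | ⟨⟨ha, -⟩ | ⟨hb, -⟩, -⟩⟩)
    · exact (D.f₁_ne_f₂ a' w ha).elim
    · obtain rfl := D.f₂.injective ha
      obtain rfl := D.f₂.injective hb
      exact h
    exacts [(D.f₁_ne_f₂ D.x w ha.symm).elim, (D.f₁_ne_f₂ D.x w' hb.symm).elim,
      (D.f₁_ne_f₂ D.y w ha.symm).elim, (D.f₁_ne_f₂ D.y w' hb.symm).elim]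
  · exact fun h => .inr (.inl ⟨w, w', rfl, rfl, h⟩)

lemma adj_f₁_f₂ (a : V₁) (w : {w : V₂ // w ≠ D.z}) : H.Adj (D.f₁ a) (D.f₂ w) ↔
    G₂.Adj D.z w.1 ∧ (a = D.x ∧ w.1 ∈ D.S ∨ a = D.y ∧ w.1 ∉ D.S) := by
  rw [D.adj_iff]
  constructor
  · rintro (⟨a', b', -, hb, -⟩ | ⟨a', b', ha, -⟩ |
      ⟨w₀, hw₀, ⟨⟨ha, hb⟩ | ⟨ha, hb⟩, hS⟩ | ⟨⟨ha, hb⟩ | ⟨ha, hb⟩, hS⟩⟩)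
    · exact (D.f₁_ne_f₂ b' w hb).elim
    · exact (D.f₁_ne_f₂ a a' ha.symm).elim
    · obtain rfl := D.f₁.injective ha
      obtain rfl := D.f₂.injective hb.symm
      exact ⟨hw₀, .inl ⟨rfl, hS⟩⟩
    · exact (D.f₁_ne_f₂ D.x w ha.symm).elim
    · obtain rfl := D.f₁.injective ha
      obtain rfl := D.f₂.injective hb.symm
      exact ⟨hw₀, .inr ⟨rfl, hS⟩⟩
    · exact (D.f₁_ne_f₂ D.y w ha.symm).elim
  · rintro ⟨h, ⟨rfl, hS⟩ | ⟨rfl, hS⟩⟩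
    · exact .inr (.inr ⟨w, h, .inl ⟨.inl ⟨rfl, rfl⟩, hS⟩⟩)
    · exact .inr (.inr ⟨w, h, .inr ⟨.inl ⟨rfl, rfl⟩, hS⟩⟩)

lemma not_adj_f₁x_f₁y : ¬ H.Adj (D.f₁ D.x) (D.f₁ D.y) := fun h =>
  ((D.adj_f₁_f₁ _ _).1 h).2.1 ⟨rfl, rfl⟩

lemma eq_x_or_eq_y_of_adj {a : V₁} {w : {w : V₂ // w ≠ D.z}} (h : H.Adj (D.f₁ a) (D.f₂ w)) :
    a = D.x ∨ a = D.y :=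
  ((D.adj_f₁_f₂ a w).1 h).2.imp And.left And.left

lemma mem_S_of_adj_f₁x {w : {w : V₂ // w ≠ D.z}} (h : H.Adj (D.f₁ D.x) (D.f₂ w)) :
    w.1 ∈ D.S :=
  (((D.adj_f₁_f₂ _ _).1 h).2.resolve_right fun h => D.x_ne_y h.1).2

lemma exists_adj_f₁x : ∃ w, H.Adj (D.f₁ D.x) (D.f₂ w) := by
  obtain ⟨w, hw⟩ := D.S_nonempty
  have hwz : w ≠ D.z := (D.adj_z_of_mem_S w hw).ne'
  exact ⟨⟨w, hwz⟩, (D.adj_f₁_f₂ _ _).2 ⟨D.adj_z_of_mem_S w hw, .inl ⟨rfl, hw⟩⟩⟩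

def swap : OreComposition H G₁ G₂ where
  x := D.y
  y := D.x
  z := D.z
  f₁ := D.f₁
  f₂ := D.f₂
  S := G₂.neighborSet D.z \ D.S
  adj_xy := D.adj_xy.symm
  adj_z_of_mem_S _ hw := hw.1
  S_nonempty := D.neighborSet_diff_S_nonempty
  neighborSet_diff_S_nonempty :=
    let ⟨w, hw⟩ := D.S_nonempty
    ⟨w, D.adj_z_of_mem_S w hw, fun h => h.2 hw⟩
  range_inter_range := D.range_inter_range
  range_union_range := D.range_union_range
  adj_iff a b := by
    rw [D.adj_iff a b]
    refine or_congr (exists₂_congr fun _ _ => by tauto) (or_congr_right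
      (exists_congr fun w => and_congr_right fun hw => ?_))
    have : w.1 ∈ G₂.neighborSet D.z := hw
    simp only [mem_sdiff, this, true_and, not_not]
    tauto

lemma exists_adj_f₁y : ∃ w, H.Adj (D.f₁ D.y) (D.f₂ w) :=
  D.swap.exists_adj_f₁x

open Classical in
/-- The end of the split vertex `z` that receives the edge `zw`. -/
noncomputable def partner (w : V₂) : V₁ := if w ∈ D.S then D.x else D.y

open Classical in
noncomputable def embed₂ (a : V₁) : V₂ ↪ V where
  toFun v := if h : v = D.z then D.f₁ a else D.f₂ ⟨v, h⟩
  inj' v v' h := by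
    dsimp only at h
    split_ifs at h with hv hv'
    · exact hv.trans hv'.symm
    · exact (D.f₁_ne_f₂ _ _ h).elim
    · exact (D.f₁_ne_f₂ _ _ h.symm).elim
    · exact congrArg Subtype.val (D.f₂.injective h)

lemma embed₂_z (a : V₁) : D.embed₂ a D.z = D.f₁ a := dif_pos rfl

lemma embed₂_of_ne (a : V₁) {v : V₂} (h : v ≠ D.z) : D.embed₂ a v = D.f₂ ⟨v, h⟩ := dif_neg h

lemma range_embed₂ (a : V₁) : range (D.embed₂ a) = insert (D.f₁ a) (range D.f₂) := by
  ext t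
  constructor
  · rintro ⟨v, rfl⟩
    by_cases hv : v = D.z
    · exact .inl (hv ▸ D.embed₂_z a)
    · exact .inr ⟨_, (D.embed₂_of_ne a hv).symm⟩
  · rintro (rfl | ⟨w, rfl⟩)
    exacts [⟨D.z, D.embed₂_z a⟩, ⟨w, D.embed₂_of_ne a w.2⟩]

lemma image_embed₂_of_notMem {R : Set V₂} (hz : D.z ∉ R) (a b : V₁) :
    D.embed₂ a '' R = D.embed₂ b '' R :=
  image_congr fun v hv => by
    rw [D.embed₂_of_ne a (ne_of_mem_of_not_mem hv hz), D.embed₂_of_ne b]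

lemma adj_embed₂_iff (a : V₁) {v v' : V₂} (hv : v ≠ D.z) (hv' : v' ≠ D.z) :
    H.Adj (D.embed₂ a v) (D.embed₂ a v') ↔ G₂.Adj v v' := by
  rw [D.embed₂_of_ne a hv, D.embed₂_of_ne a hv', adj_f₂_f₂]

lemma adj_of_adj_embed₂ (a : V₁) {v v' : V₂} (h : H.Adj (D.embed₂ a v) (D.embed₂ a v')) :
    G₂.Adj v v' := by
  by_cases hv : v = D.z <;> by_cases hv' : v' = D.z
  · exact absurd (hv.trans hv'.symm ▸ h) (H.irrefl)
  · subst hv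
    rw [D.embed₂_z, D.embed₂_of_ne a hv'] at h
    exact ((D.adj_f₁_f₂ a _).1 h).1
  · subst hv'
    rw [D.embed₂_z, D.embed₂_of_ne a hv] at h
    exact ((D.adj_f₁_f₂ a _).1 h.symm).1.symm
  · exact (D.adj_embed₂_iff a hv hv').1 h

lemma adj_f₂_embed₂_partner_iff (w : {w : V₂ // w ≠ D.z}) (v : V₂) :
    H.Adj (D.f₂ w) (D.embed₂ (D.partner w) v) ↔ G₂.Adj w v := by
  by_cases hv : v = D.z
  · subst hv
    rw [D.embed₂_z, H.adj_comm, adj_f₁_f₂, G₂.adj_comm, partner]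
    have := D.x_ne_y
    split_ifs with hS <;> simp [hS, this, this.symm]
  · rw [D.embed₂_of_ne _ hv, adj_f₂_f₂]

lemma neighborSet_f₂ (w : {w : V₂ // w ≠ D.z}) :
    H.neighborSet (D.f₂ w) = D.embed₂ (D.partner w) '' G₂.neighborSet w := by
  ext t
  refine ⟨fun ht => ?_, ?_⟩
  · rcases D.mem_range_f₁_or_f₂ t with ⟨a, rfl⟩ | ⟨w', rfl⟩
    · obtain ⟨hzw, ha⟩ := (D.adj_f₁_f₂ a w).1 ht.symm
      refine ⟨D.z, hzw.symm, ?_⟩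
      rw [D.embed₂_z, partner]
      rcases ha with ⟨rfl, hS⟩ | ⟨rfl, hS⟩ <;> simp [hS]
    · exact ⟨w', (D.adj_f₂_f₂ w w').1 ht, D.embed₂_of_ne _ w'.2⟩
  · rintro ⟨v, hv, rfl⟩
    exact (D.adj_f₂_embed₂_partner_iff w v).2 hv

lemma degS_f₂ (w : {w : V₂ // w ≠ D.z}) : degS H (D.f₂ w) = degS G₂ w := by
  rw [degS, degS, neighborSet_f₂, ncard_image_of_injective _ (D.embed₂ _).injective]

lemma degS_f₁ {a : V₁} (hax : a ≠ D.x) (hay : a ≠ D.y) : degS H (D.f₁ a) = degS G₁ a := by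
  have : H.neighborSet (D.f₁ a) = D.f₁ '' G₁.neighborSet a := by
    ext t
    refine ⟨fun ht => ?_, ?_⟩
    · rcases D.mem_range_f₁_or_f₂ t with ⟨b, rfl⟩ | ⟨w, rfl⟩
      · exact ⟨b, ((D.adj_f₁_f₁ a b).1 ht).1, rfl⟩
      · rcases D.eq_x_or_eq_y_of_adj ht with h | h <;> contradiction
    · rintro ⟨b, hb, rfl⟩
      exact (D.adj_f₁_f₁ a b).2 ⟨hb, fun h => hax h.1, fun h => hay h.1⟩
  rw [degS, degS, this, ncard_image_of_injective _ D.f₁.injective]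

/-- When `y` receives a single edge of `z`, that edge replaces the deleted edge `yx`. -/
lemma degS_f₁y (h : (G₂.neighborSet D.z \ D.S).ncard = 1) :
    degS H (D.f₁ D.y) = degS G₁ D.y := by
  classical
  obtain ⟨w, hw⟩ := ncard_eq_one.1 h
  have hwS : w ∈ G₂.neighborSet D.z \ D.S := hw ▸ rfl
  have hwz : w ≠ D.z := hwS.1.ne'
  let g : V₁ → V := fun b => if b = D.x then D.f₂ ⟨w, hwz⟩ else D.f₁ b
  have hg : Function.Injective g := by
    intro b b' hbb'
    simp only [g] at hbb'
    split_ifs at hbb' with hb hb'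
    · exact hb.trans hb'.symm
    · exact (D.f₁_ne_f₂ _ _ hbb'.symm).elim
    · exact (D.f₁_ne_f₂ _ _ hbb').elim
    · exact D.f₁.injective hbb'
  have : H.neighborSet (D.f₁ D.y) = g '' G₁.neighborSet D.y := by
    ext t
    refine ⟨fun ht => ?_, ?_⟩
    · rcases D.mem_range_f₁_or_f₂ t with ⟨b, rfl⟩ | ⟨w', rfl⟩
      · obtain ⟨hb, -, hbx⟩ := (D.adj_f₁_f₁ D.y b).1 ht
        exact ⟨b, hb, if_neg fun h => hbx ⟨rfl, h⟩⟩
      · obtain ⟨hzw', hS⟩ := (D.adj_f₁_f₂ D.y w').1 ht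
        have hw' : w'.1 ∈ ({w} : Set V₂) := hw ▸ ⟨hzw', hS.resolve_left
          (fun h => D.x_ne_y h.1.symm) |>.2⟩
        refine ⟨D.x, D.adj_xy.symm, ?_⟩
        simp only [g, if_pos rfl]
        exact congrArg D.f₂ (Subtype.ext (mem_singleton_iff.1 hw').symm)
    · rintro ⟨b, hb, rfl⟩
      by_cases hbx : b = D.x
      · simp only [g, if_pos hbx]
        exact (D.adj_f₁_f₂ _ _).2 ⟨hwS.1, .inr ⟨rfl, hwS.2⟩⟩
      · simp only [g, if_neg hbx]
        exact (D.adj_f₁_f₁ _ _).2 ⟨hb, fun h => D.x_ne_y h.1.symm, fun h => hbx h.2⟩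
  rw [degS, degS, this, ncard_image_of_injective _ hg]

lemma oreCollapsible_range_f₁ (h₁ : Is5Ore G₁) : OreCollapsible H (range D.f₁) := by
  let e : V₁ ≃ range D.f₁ := Equiv.ofInjective _ D.f₁.injective
  obtain ⟨wx, hwx⟩ := D.exists_adj_f₁x
  obtain ⟨wy, hwy⟩ := D.exists_adj_f₁y
  have hf₂ : ∀ w, D.f₂ w ∉ range D.f₁ := fun w ⟨a, ha⟩ => D.f₁_ne_f₂ a w ha
  refine ⟨(ne_univ_iff_exists_notMem _).2 ⟨_, hf₂ wx⟩, e D.x, e D.y,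
    D.f₁.injective.ne D.x_ne_y, D.not_adj_f₁x_f₁y, ?_, h₁.of_iso ⟨e, fun {a b} => ?_⟩⟩
  · ext t
    constructor
    · rintro ⟨⟨a, rfl⟩, _, hout, hadj⟩
      rcases D.mem_range_f₁_or_f₂ _ |>.resolve_left hout with ⟨w, rfl⟩
      rcases D.eq_x_or_eq_y_of_adj hadj with rfl | rfl
      exacts [.inl rfl, .inr rfl]
    · rintro (rfl | rfl)
      exacts [⟨⟨D.x, rfl⟩, _, hf₂ wx, hwx⟩, ⟨⟨D.y, rfl⟩, _, hf₂ wy, hwy⟩]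
  · have hab : a ≠ b → (a = D.x ∧ b = D.y ∨ a = D.y ∧ b = D.x) → G₁.Adj a b := by
      rintro - (⟨rfl, rfl⟩ | ⟨rfl, rfl⟩)
      exacts [D.adj_xy, D.adj_xy.symm]
    simp only [addEdge_adj, induce_adj, e.injective.eq_iff, ne_eq]
    rw [show (e a : V) = D.f₁ a from rfl, show (e b : V) = D.f₁ b from rfl, adj_f₁_f₁]
    have := G₁.ne_of_adj (a := a) (b := b)
    tauto

lemma oreCollapsible_image_embed₂ {R : Set V₂} (hR : OreCollapsible G₂ R) (hz : D.z ∉ R)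
    (a : V₁) : OreCollapsible H (D.embed₂ a '' R) := by
  refine hR.image _ (D.embed₂ a).injective.injOn
    (fun v hv v' hv' => (D.adj_embed₂_iff a (ne_of_mem_of_not_mem hv hz)
      (ne_of_mem_of_not_mem hv' hz)).symm) (fun r hr => ?_)
    ((ne_univ_iff_exists_notMem _).2 ⟨_, (D.embed₂ a).injective.mem_set_image.not.2 hz⟩)
  have hrz : r ≠ D.z := ne_of_mem_of_not_mem hr hz
  rw [D.image_embed₂_of_notMem hz a (D.partner r), D.embed₂_of_ne a hrz]
  constructor
  · rintro ⟨s, hs, hrs⟩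
    exact ⟨_, (D.embed₂ _).injective.mem_set_image.not.2 hs,
      (D.adj_f₂_embed₂_partner_iff ⟨r, hrz⟩ s).2 hrs⟩
  · rintro ⟨t, ht, hrt⟩
    obtain ⟨s, hrs, rfl⟩ := (D.neighborSet_f₂ ⟨r, hrz⟩).subset hrt
    exact ⟨s, fun hs => ht ⟨s, hs, rfl⟩, hrs⟩

lemma isEmerald_image_embed₂ {E : Set V₂} (hE : IsEmerald G₂ E) (hz : D.z ∉ E) (a : V₁) :
    IsEmerald H (D.embed₂ a '' E) :=
  hE.image _ (D.embed₂ a).injective.injOn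
    (fun v hv v' hv' => (D.adj_embed₂_iff a (ne_of_mem_of_not_mem hv hz)
      (ne_of_mem_of_not_mem hv' hz)).2)
    (fun r hr => by rw [D.embed₂_of_ne a (ne_of_mem_of_not_mem hr hz), degS_f₂])

lemma adj_f₁_f₁_of_ne_x {a b : V₁} (ha : a ≠ D.x) (hb : b ≠ D.x) :
    H.Adj (D.f₁ a) (D.f₁ b) ↔ G₁.Adj a b := by
  rw [adj_f₁_f₁]
  exact and_iff_left ⟨fun h => ha h.1, fun h => hb h.2⟩

lemma oreCollapsible_image_f₁ {R : Set V₁} (hR : OreCollapsible G₁ R) (hx : D.x ∉ R) :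
    OreCollapsible H (D.f₁ '' R) := by
  obtain ⟨wy, hwy⟩ := D.exists_adj_f₁y
  have hf₂ : ∀ w, D.f₂ w ∉ D.f₁ '' R := fun w ⟨a, _, ha⟩ => D.f₁_ne_f₂ a w ha
  refine hR.image _ D.f₁.injective.injOn
    (fun a ha b hb => (D.adj_f₁_f₁_of_ne_x (ne_of_mem_of_not_mem ha hx)
      (ne_of_mem_of_not_mem hb hx)).symm) (fun r hr => ?_)
    ((ne_univ_iff_exists_notMem _).2 ⟨_, hf₂ wy⟩)
  have hrx : r ≠ D.x := ne_of_mem_of_not_mem hr hx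
  constructor
  · rintro ⟨s, hs, hrs⟩
    by_cases hry : r = D.y
    · exact ⟨_, hf₂ wy, hry ▸ hwy⟩
    · exact ⟨_, D.f₁.injective.mem_set_image.not.2 hs,
        (D.adj_f₁_f₁ r s).2 ⟨hrs, fun h => hrx h.1, fun h => hry h.1⟩⟩
  · rintro ⟨t, ht, hrt⟩
    rcases D.mem_range_f₁_or_f₂ t with ⟨b, rfl⟩ | ⟨w, rfl⟩
    · exact ⟨b, fun hb => ht ⟨b, hb, rfl⟩, ((D.adj_f₁_f₁ r b).1 hrt).1⟩
    · obtain rfl := (D.eq_x_or_eq_y_of_adj hrt).resolve_left hrx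
      exact ⟨D.x, hx, D.adj_xy.symm⟩

lemma isEmerald_image_f₁ {E : Set V₁} (hE : IsEmerald G₁ E) (hx : D.x ∉ E)
    (h : (G₂.neighborSet D.z \ D.S).ncard = 1) : IsEmerald H (D.f₁ '' E) :=
  hE.image _ D.f₁.injective.injOn
    (fun a ha b hb => (D.adj_f₁_f₁_of_ne_x (ne_of_mem_of_not_mem ha hx)
      (ne_of_mem_of_not_mem hb hx)).2)
    (fun r hr => by
      by_cases hry : r = D.y
      · exact hry ▸ D.degS_f₁y h
      · exact D.degS_f₁ (ne_of_mem_of_not_mem hr hx) hry)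

lemma existsCollapsibleOrEmeraldDisjoint_of_embed₂ {T : Set V} {T₂ : Set V₂} (hz : D.z ∈ T₂)
    (hT : D.embed₂ D.x ⁻¹' T ⊆ T₂) (h : ExistsCollapsibleOrEmeraldDisjoint G₂ T₂) :
    ExistsCollapsibleOrEmeraldDisjoint H T := by
  have hdisj {E : Set V₂} (hE : Disjoint E T₂) : Disjoint (D.embed₂ D.x '' E) T :=
    disjoint_image_left.2 (hE.mono_right hT)
  rcases h with ⟨R, hR, hRT⟩ | ⟨E, hE, hET⟩
  · exact .inl ⟨_, D.oreCollapsible_image_embed₂ hR (hRT.notMem_of_mem_right hz) _, hdisj hRT⟩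
  · exact .inr ⟨_, D.isEmerald_image_embed₂ hE (hET.notMem_of_mem_right hz) _, hdisj hET⟩

lemma existsCollapsibleOrEmeraldDisjoint_of_f₁ {T : Set V} (hT : D.f₁ ⁻¹' T ⊆ {D.x})
    (hS : (G₂.neighborSet D.z \ D.S).ncard = 1) (h : ExistsCollapsibleOrEmeraldDisjoint G₁ {D.x}) :
    ExistsCollapsibleOrEmeraldDisjoint H T := by
  have hdisj {E : Set V₁} (hE : Disjoint E {D.x}) : Disjoint (D.f₁ '' E) T :=
    disjoint_image_left.2 (hE.mono_right hT)
  rcases h with ⟨R, hR, hRT⟩ | ⟨E, hE, hET⟩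
  · exact .inl ⟨_, D.oreCollapsible_image_f₁ hR (disjoint_singleton_right.1 hRT), hdisj hRT⟩
  · exact .inr ⟨_, D.isEmerald_image_f₁ hE (disjoint_singleton_right.1 hET) hS, hdisj hET⟩

lemma existsCollapsibleOrEmeraldDisjoint_of_disjoint_range_f₂ {T : Set V}
    (hT : Disjoint (range D.f₂) T) (h : ExistsCollapsibleOrEmeraldDisjoint G₂ {D.z}) :
    ExistsCollapsibleOrEmeraldDisjoint H T :=
  D.existsCollapsibleOrEmeraldDisjoint_of_embed₂ (mem_singleton _) (fun v hv => by
    rw [mem_singleton_iff]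
    by_contra hvz
    exact hT.notMem_of_mem_right hv ⟨⟨v, hvz⟩, (D.embed₂_of_ne _ hvz).symm⟩) h

lemma subset_range_embed₂ {T : Set V} (hT : H.IsClique T) (hxT : D.f₁ D.x ∈ T)
    {w : {w : V₂ // w ≠ D.z}} (hwT : D.f₂ w ∈ T) : T ⊆ range (D.embed₂ D.x) := by
  rw [range_embed₂]
  intro t ht
  rcases D.mem_range_f₁_or_f₂ t with ⟨b, rfl⟩ | hw
  · rcases D.eq_x_or_eq_y_of_adj (hT ht hwT (D.f₁_ne_f₂ b w)) with rfl | rfl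
    · exact .inl rfl
    · exact (D.not_adj_f₁x_f₁y (hT hxT ht (D.f₁.injective.ne D.x_ne_y))).elim
  · exact .inr hw

lemma preimage_f₁_subset {T : Set V} (hT : T ⊆ range (D.embed₂ D.x)) : D.f₁ ⁻¹' T ⊆ {D.x} := by
  intro b hb
  rcases (D.range_embed₂ D.x ▸ hT hb : D.f₁ b ∈ insert (D.f₁ D.x) (range D.f₂)) with h | ⟨w, hw⟩
  · exact D.f₁.injective h
  · exact (D.f₁_ne_f₂ b w hw.symm).elim

lemma isClique_preimage_embed₂ {T : Set V} (hT : H.IsClique T) (a : V₁) :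
    G₂.IsClique (D.embed₂ a ⁻¹' T) := fun _ hv _ hv' hne =>
  D.adj_of_adj_embed₂ a (hT hv hv' ((D.embed₂ a).injective.ne hne))

lemma ncard_neighborSet_diff_S_eq_one (hK : IsK5 G₂) (hS : 3 ≤ D.S.ncard) :
    (G₂.neighborSet D.z \ D.S).ncard = 1 := by
  have := hK.finite
  have hsub : D.S ⊆ G₂.neighborSet D.z := D.adj_z_of_mem_S
  have hpos := (ncard_pos (toFinite _)).2 D.neighborSet_diff_S_nonempty
  have hle := ncard_le_ncard hsub
  rw [ncard_sdiff hsub] at hpos ⊢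
  rw [hK.neighborSet_eq, hK.ncard_compl_singleton] at hpos hle ⊢
  omega

lemma existsCollapsibleOrEmeraldDisjoint_of_f₁x_mem {T : Set V} (hT : H.IsClique T)
    (hT4 : T.ncard = 4) (hxT : D.f₁ D.x ∈ T) {w : {w : V₂ // w ≠ D.z}} (hwT : D.f₂ w ∈ T)
    (ih₁ : ExistsCollapsibleOrEmeraldDisjoint G₁ {D.x})
    (ih₂ : ∀ T₂ : Set V₂, G₂.IsClique T₂ → T₂.ncard = 4 →
      IsK5 G₂ ∨ ExistsCollapsibleOrEmeraldDisjoint G₂ T₂) :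
    ExistsCollapsibleOrEmeraldDisjoint H T := by
  have hT₂ := D.subset_range_embed₂ hT hxT hwT
  set T₂ := D.embed₂ D.x ⁻¹' T
  have hzT₂ : D.z ∈ T₂ := by simpa [T₂, embed₂_z] using hxT
  have hT₂4 : T₂.ncard = 4 := by
    rw [ncard_preimage_of_injective_subset_range (D.embed₂ _).injective hT₂, hT4]
  rcases ih₂ T₂ (D.isClique_preimage_embed₂ hT D.x) hT₂4 with hK | h
  · have hS : T₂ \ {D.z} ⊆ D.S := fun v ⟨hv, (hvz : v ≠ D.z)⟩ => by
      have hv' : D.f₂ ⟨v, hvz⟩ ∈ T := by rw [← D.embed₂_of_ne D.x hvz]; exact hv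
      exact D.mem_S_of_adj_f₁x (hT hxT hv' (D.f₁_ne_f₂ _ _))
    have h3 : 3 ≤ D.S.ncard := by
      have := hK.finite
      have := ncard_le_ncard hS
      rw [ncard_sdiff_singleton_of_mem hzT₂, hT₂4] at this
      omega
    exact D.existsCollapsibleOrEmeraldDisjoint_of_f₁ (D.preimage_f₁_subset hT₂)
      (D.ncard_neighborSet_diff_S_eq_one hK h3) ih₁
  · exact D.existsCollapsibleOrEmeraldDisjoint_of_embed₂ hzT₂ subset_rfl h

end OreComposition

end OreComposition

open Set in
theorem Is5Ore.isK5_or_existsCollapsibleOrEmeraldDisjoint {V : Type} {H : SimpleGraph V}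
    (h : Is5Ore H) (T : Set V) (hT : H.IsClique T) (hTcard : T.Subsingleton ∨ T.ncard = 4) :
    IsK5 H ∨ ExistsCollapsibleOrEmeraldDisjoint H T := by
  induction h with
  | k5 h => exact .inl h
  | ore h₁ _ hcomp ih₁ ih₂ =>
    obtain ⟨D⟩ := hcomp.nonempty_oreComposition
    have ih₁_singleton (a) : ExistsCollapsibleOrEmeraldDisjoint _ {a} :=
      (ih₁ {a} (isClique_singleton a) (.inl subsingleton_singleton)).elim
        (·.existsCollapsibleOrEmeraldDisjoint_singleton a) id
    have ih₂_singleton (v) : ExistsCollapsibleOrEmeraldDisjoint _ {v} :=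
      (ih₂ {v} (isClique_singleton v) (.inl subsingleton_singleton)).elim
        (·.existsCollapsibleOrEmeraldDisjoint_singleton v) id
    have ih₂_K₄ T₂ hT₂ (hT₂4 : T₂.ncard = 4) := ih₂ T₂ hT₂ (.inr hT₂4)
    refine .inr ?_
    by_cases hT₁ : Disjoint (range D.f₁) T
    · exact .inl ⟨_, D.oreCollapsible_range_f₁ h₁, hT₁⟩
    by_cases hT₂ : Disjoint (range D.f₂) T
    · exact D.existsCollapsibleOrEmeraldDisjoint_of_disjoint_range_f₂ hT₂ (ih₂_singleton D.z)
    obtain ⟨_, ⟨a, rfl⟩, ha⟩ := not_disjoint_iff.1 hT₁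
    obtain ⟨_, ⟨w, rfl⟩, hw⟩ := not_disjoint_iff.1 hT₂
    have hT4 : T.ncard = 4 := hTcard.resolve_left fun hs => D.f₁_ne_f₂ a w (hs ha hw)
    rcases D.eq_x_or_eq_y_of_adj (hT ha hw (D.f₁_ne_f₂ a w)) with rfl | rfl
    · exact D.existsCollapsibleOrEmeraldDisjoint_of_f₁x_mem hT hT4 ha hw
        (ih₁_singleton _) ih₂_K₄
    · exact D.swap.existsCollapsibleOrEmeraldDisjoint_of_f₁x_mem hT hT4 ha hw
        (ih₁_singleton _) ih₂_K₄

theorem stmt_5_general {V : Type} (H : SimpleGraph V) (h5 : Is5Ore H) (hK : ¬ IsK5 H)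
    (T : Set V) (hT4 : T.ncard = 4) (hTcl : ∀ a ∈ T, ∀ b ∈ T, a ≠ b → H.Adj a b) :
    (∃ R : Set V, OreCollapsible H R ∧ Disjoint R T) ∨
    (∃ S : Set V, IsEmerald H S ∧ Disjoint S T) :=
  (h5.isK5_or_existsCollapsibleOrEmeraldDisjoint T hTcl (.inr hT4)).resolve_left hK

/-- If `H ≠ K₅` is 5-Ore and `T` is a subgraph of `H` isomorphic to `K₄`, then there exists
either an Ore-collapsible subset of `H` disjoint from `T` or an emerald of `H` disjoint
from `T`. -/
theorem stmt_5 {V : Type} [Fintype V] (H : SimpleGraph V) (h5 : Is5Ore H) (hK : ¬ IsK5 H)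
    (T : Set V) (hT4 : T.ncard = 4) (hTcl : ∀ a ∈ T, ∀ b ∈ T, a ≠ b → H.Adj a b) :
    (∃ R : Set V, OreCollapsible H R ∧ Disjoint R T) ∨
    (∃ S : Set V, IsEmerald H S ∧ Disjoint S T) :=
  stmt_5_general H h5 hK T hT4 hTcl

end Postle
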